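/- arXiv:1905.05604 — 5 statements merged into one kernel-verified Lean document; each statement's English description precedes it below -/
import Mathlib

section
/- Let n ≥ 2 and let K_{n,n} be the metric space on points a₁,…,aₙ,b₁,…,bₙ with d(aᵢ,aⱼ) = d(bᵢ,bⱼ) = 2 for i ≠ j and d(aᵢ,bⱼ) = 1 for all i,j. Then for q ≥ 0, the generalized roundness inequality Σ_{i<j}(d(aᵢ,aⱼ)^q + d(bᵢ,bⱼ)^q) ≤ Σ_{i,j} d(aᵢ,bⱼ)^q holds if and only if q ≤ log₂(1 + 1/(n−1)). -/
/-! The distances are constant on each kind of pair, so the inequality reads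
`(n² - n) · 2^q ≤ n²`, that is `2^q ≤ n / (n - 1) = 1 + 1 / (n - 1)`. -/

open Finset

theorem sum_sum_ite_lt_one {ι : Type*} [Fintype ι] [LinearOrder ι] :
    ∑ i : ι, ∑ j : ι, (if i < j then (1 : ℝ) else 0) =
      ((Fintype.card ι : ℝ) ^ 2 - Fintype.card ι) / 2 := by
  have hsymm : ∀ i j : ι,
      (if i < j then (1 : ℝ) else 0) + (if j < i then 1 else 0) = 1 - if i = j then 1 else 0 := by
    intro i j
    rcases lt_trichotomy i j with h | rfl | h
    · simp [h, h.ne, h.not_gt]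
    · simp
    · simp [h, h.ne', h.not_gt]
  have hcount : 2 * ∑ i : ι, ∑ j : ι, (if i < j then (1 : ℝ) else 0) =
      (Fintype.card ι : ℝ) ^ 2 - Fintype.card ι :=
    calc 2 * ∑ i : ι, ∑ j : ι, (if i < j then (1 : ℝ) else 0)
        = ∑ i : ι, ∑ j : ι, ((if i < j then (1 : ℝ) else 0) + (if j < i then 1 else 0)) := by
          simp only [sum_add_distrib]
          rw [sum_comm (f := fun i j => if j < i then (1 : ℝ) else 0)]
          ring
      _ = ∑ i : ι, ∑ j : ι, (1 - if i = j then (1 : ℝ) else 0) := by simp only [hsymm]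
      _ = (Fintype.card ι : ℝ) ^ 2 - Fintype.card ι := by
          simp only [sum_sub_distrib, sum_const, card_univ, nsmul_eq_mul, mul_one, sum_ite_eq,
            mem_univ, ↓reduceIte]
          ring
  linarith

theorem sum_sum_ite_lt_of_eq {ι : Type*} [Fintype ι] [LinearOrder ι] {f : ι → ι → ℝ} {c : ℝ}
    (hf : ∀ i j, i < j → f i j = c) :
    ∑ i : ι, ∑ j : ι, (if i < j then f i j else 0) =
      c * (((Fintype.card ι : ℝ) ^ 2 - Fintype.card ι) / 2) := by
  rw [← sum_sum_ite_lt_one, mul_sum]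
  refine sum_congr rfl fun i _ => ?_
  rw [mul_sum]
  refine sum_congr rfl fun j _ => ?_
  split_ifs with h
  · simp [hf i j h]
  · simp

theorem sq_sub_mul_two_rpow_le_sq_iff {x : ℝ} (hx : 1 < x) (q : ℝ) :
    (x ^ 2 - x) * 2 ^ q ≤ x ^ 2 ↔ q ≤ Real.logb 2 (1 + 1 / (x - 1)) := by
  have hx1 : 0 < x - 1 := by linarith
  have : 1 + 1 / (x - 1) = x / (x - 1) := by field_simp; ring
  rw [this, Real.le_logb_iff_rpow_le one_lt_two (by positivity), le_div_iff₀ hx1]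
  constructor <;> intro h <;> nlinarith

theorem stmt2_general (n : ℕ) (hn : 2 ≤ n) (q : ℝ)
    (d : (Fin n ⊕ Fin n) → (Fin n ⊕ Fin n) → ℝ)
    (hda : ∀ i j : Fin n, i ≠ j → d (Sum.inl i) (Sum.inl j) = 2)
    (hdb : ∀ i j : Fin n, i ≠ j → d (Sum.inr i) (Sum.inr j) = 2)
    (hdab : ∀ i j : Fin n, d (Sum.inl i) (Sum.inr j) = 1) :
    ((∑ i : Fin n, ∑ j : Fin n, if i < j then
        d (Sum.inl i) (Sum.inl j) ^ q + d (Sum.inr i) (Sum.inr j) ^ q else 0) ≤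
      ∑ i : Fin n, ∑ j : Fin n, d (Sum.inl i) (Sum.inr j) ^ q) ↔
    q ≤ Real.logb 2 (1 + 1 / ((n : ℝ) - 1)) := by
  have hwithin := sum_sum_ite_lt_of_eq
    (f := fun i j => d (Sum.inl i) (Sum.inl j) ^ q + d (Sum.inr i) (Sum.inr j) ^ q)
    (c := 2 ^ q + 2 ^ q) fun i j h => by simp only [hda i j h.ne, hdb i j h.ne]
  have hacross : ∑ i : Fin n, ∑ j : Fin n, d (Sum.inl i) (Sum.inr j) ^ q = (n : ℝ) ^ 2 := by
    simp [hdab, sq]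
  rw [hwithin, hacross, Fintype.card_fin, ← sq_sub_mul_two_rpow_le_sq_iff (by exact_mod_cast hn)]
  ring_nf

/-- For the metric space `K_{n,n}` (distance 2 within each part, distance 1 across parts),
the generalized roundness-`q` inequality holds iff `q ≤ log₂(1 + 1/(n-1))`. -/
theorem stmt2 (n : ℕ) (hn : 2 ≤ n) (q : ℝ) (hq : 0 ≤ q)
    (d : (Fin n ⊕ Fin n) → (Fin n ⊕ Fin n) → ℝ)
    (hda : ∀ i j : Fin n, i ≠ j → d (Sum.inl i) (Sum.inl j) = 2)
    (hdb : ∀ i j : Fin n, i ≠ j → d (Sum.inr i) (Sum.inr j) = 2)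
    (hdab : ∀ i j : Fin n, d (Sum.inl i) (Sum.inr j) = 1) :
    ((∑ i : Fin n, ∑ j : Fin n, if i < j then
        d (Sum.inl i) (Sum.inl j) ^ q + d (Sum.inr i) (Sum.inr j) ^ q else 0) ≤
      ∑ i : Fin n, ∑ j : Fin n, d (Sum.inl i) (Sum.inr j) ^ q) ↔
    q ≤ Real.logb 2 (1 + 1 / ((n : ℝ) - 1)) :=
  stmt2_general n hn q d hda hdb hdab
end

section
/- With the setting of the embedding φ(x)(k) = (2c(k−1), 2ck + d(x,x_k)), c > diam X: any partial matching f between φ(x) and φ(y) that either leaves some index k unmatched or matches some index k to an index k' ≠ k has ∞-cost at least c. Consequently, since the identity matching has cost d(x,y) < c, the bottleneck distance between φ(x) and φ(y) equals d(x,y). -/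
open scoped ENNReal

noncomputable section

/-- The ℓ∞ metric on ℝ². -/
def dinf (a b : ℝ × ℝ) : ℝ := max |a.1 - b.1| |a.2 - b.2|

/-- The ℓ∞ distance from a point to the diagonal Δ. -/
def ddiag (a : ℝ × ℝ) : ℝ := (a.2 - a.1) / 2

/-- A partial matching between two (indexed) persistence diagrams. -/
structure PartialMatching {I₁ I₂ : Type*} (D₁ : I₁ → ℝ × ℝ) (D₂ : I₂ → ℝ × ℝ) where
  S₁ : Set I₁
  S₂ : Set I₂
  f : S₁ → S₂
  bij : Function.Bijective f

/-- The ∞-cost of a partial matching. -/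
def costInf {I₁ I₂ : Type*} {D₁ : I₁ → ℝ × ℝ} {D₂ : I₂ → ℝ × ℝ}
    (M : PartialMatching D₁ D₂) : ℝ≥0∞ :=
  max (⨆ i : M.S₁, ENNReal.ofReal (dinf (D₁ i.1) (D₂ (M.f i).1)))
    (max (⨆ i : {i : I₁ // i ∉ M.S₁}, ENNReal.ofReal (ddiag (D₁ i.1)))
      (⨆ i : {i : I₂ // i ∉ M.S₂}, ENNReal.ofReal (ddiag (D₂ i.1))))

/-- The bottleneck distance between two diagrams. -/
def bottleneck {I₁ I₂ : Type*} (D₁ : I₁ → ℝ × ℝ) (D₂ : I₂ → ℝ × ℝ) : ℝ≥0∞ :=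
  ⨅ M : PartialMatching D₁ D₂, costInf M

/-- The empty persistence diagram. -/
def emptyD : Empty → ℝ × ℝ := fun e => e.elim

/-
The `k`-th points of `φ(x)` and `φ(y)` have birth `2ck`, so points with different indices are at
ℓ∞-distance at least `2c`, and every point lies at distance at least `c` from the diagonal. Since
`c > diam X`, a matching that does not pair equal indices therefore costs at least `c > d(x, y)`.
The matching that does costs `sup_k |d(x, x_k) - d(y, x_k)|`, which is at most `d(x, y)` by the
triangle inequality and at least `d(x, y)` because the `x_k` come arbitrarily close to `y`.
-/

namespace PartialMatching

variable {I₁ I₂ : Type*} {D₁ : I₁ → ℝ × ℝ} {D₂ : I₂ → ℝ × ℝ}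

theorem ofReal_dinf_le_costInf (M : PartialMatching D₁ D₂) (i : M.S₁) :
    ENNReal.ofReal (dinf (D₁ i) (D₂ (M.f i))) ≤ costInf M :=
  le_max_of_le_left <| le_iSup (fun i : M.S₁ => ENNReal.ofReal (dinf (D₁ i) (D₂ (M.f i)))) i

theorem ofReal_ddiag_le_costInf_of_notMem_left (M : PartialMatching D₁ D₂) {i : I₁}
    (hi : i ∉ M.S₁) : ENNReal.ofReal (ddiag (D₁ i)) ≤ costInf M :=
  le_max_of_le_right <| le_max_of_le_left <|
    le_iSup (fun i : {i // i ∉ M.S₁} => ENNReal.ofReal (ddiag (D₁ i))) ⟨i, hi⟩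

theorem ofReal_ddiag_le_costInf_of_notMem_right (M : PartialMatching D₁ D₂) {i : I₂}
    (hi : i ∉ M.S₂) : ENNReal.ofReal (ddiag (D₂ i)) ≤ costInf M :=
  le_max_of_le_right <| le_max_of_le_right <|
    le_iSup (fun i : {i // i ∉ M.S₂} => ENNReal.ofReal (ddiag (D₂ i))) ⟨i, hi⟩

def refl {I : Type*} (D₁ D₂ : I → ℝ × ℝ) : PartialMatching D₁ D₂ :=
  ⟨Set.univ, Set.univ, id, Function.bijective_id⟩

theorem costInf_refl_le {I : Type*} {D₁ D₂ : I → ℝ × ℝ} {r : ℝ}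
    (h : ∀ i, dinf (D₁ i) (D₂ i) ≤ r) : costInf (refl D₁ D₂) ≤ ENNReal.ofReal r := by
  refine max_le (iSup_le fun i => ENNReal.ofReal_le_ofReal (h i)) (max_le ?_ ?_)
  · exact iSup_le fun i => absurd (Set.mem_univ i.1) i.2
  · exact iSup_le fun i => absurd (Set.mem_univ i.1) i.2

end PartialMatching

theorem bottleneck_le_of_forall_dinf_le {I : Type*} {D₁ D₂ : I → ℝ × ℝ} {r : ℝ}
    (h : ∀ i, dinf (D₁ i) (D₂ i) ≤ r) : bottleneck D₁ D₂ ≤ ENNReal.ofReal r :=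
  (iInf_le _ _).trans (PartialMatching.costInf_refl_le h)

section Embedding

variable {X : Type*} [PseudoMetricSpace X] (xs : ℕ → X) (c : ℝ)

def diagramEmbedding (x : X) (k : ℕ) : ℝ × ℝ :=
  (2 * c * k, 2 * c * (k + 1) + dist x (xs k))

variable {xs c}

theorem le_ddiag_diagramEmbedding (x : X) (k : ℕ) : c ≤ ddiag (diagramEmbedding xs c x k) := by
  have := dist_nonneg (x := x) (y := xs k)
  simp only [ddiag, diagramEmbedding]
  linarith

theorem le_dinf_diagramEmbedding_of_ne (hc : 0 ≤ c) (x y : X) {k k' : ℕ} (h : k ≠ k') :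
    2 * c ≤ dinf (diagramEmbedding xs c x k) (diagramEmbedding xs c y k') :=
  calc 2 * c ≤ 2 * c * |(k : ℝ) - k'| :=
        le_mul_of_one_le_right (by positivity)
          (by exact_mod_cast Int.one_le_abs (sub_ne_zero.2 (Int.natCast_inj.not.2 h)))
    _ = |2 * c * k - 2 * c * k'| := by
        rw [← mul_sub, abs_mul, abs_of_nonneg (by positivity : 0 ≤ 2 * c)]
    _ ≤ dinf (diagramEmbedding xs c x k) (diagramEmbedding xs c y k') := le_max_left _ _

theorem dinf_diagramEmbedding_self (x y : X) (k : ℕ) :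
    dinf (diagramEmbedding xs c x k) (diagramEmbedding xs c y k) =
      |dist x (xs k) - dist y (xs k)| := by
  simp only [dinf, diagramEmbedding, sub_self, abs_zero, add_sub_add_left_eq_sub]
  exact max_eq_right (abs_nonneg _)

theorem ofReal_le_costInf_diagramEmbedding (hc : 0 ≤ c) {x y : X}
    (M : PartialMatching (diagramEmbedding xs c x) (diagramEmbedding xs c y))
    (hM : ∃ k : ℕ, k ∉ M.S₁ ∨ k ∉ M.S₂ ∨ ∃ h : k ∈ M.S₁, (M.f ⟨k, h⟩).1 ≠ k) :
    ENNReal.ofReal c ≤ costInf M := by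
  obtain ⟨k, hk | hk | ⟨hk, hne⟩⟩ := hM
  · exact (ENNReal.ofReal_le_ofReal (le_ddiag_diagramEmbedding x k)).trans
      (M.ofReal_ddiag_le_costInf_of_notMem_left hk)
  · exact (ENNReal.ofReal_le_ofReal (le_ddiag_diagramEmbedding y k)).trans
      (M.ofReal_ddiag_le_costInf_of_notMem_right hk)
  · have := le_dinf_diagramEmbedding_of_ne (xs := xs) hc x y (Ne.symm hne)
    exact (ENNReal.ofReal_le_ofReal (by linarith)).trans (M.ofReal_dinf_le_costInf ⟨k, hk⟩)

theorem ofReal_dist_le_costInf_diagramEmbedding (hxs : DenseRange xs) {x y : X}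
    (M : PartialMatching (diagramEmbedding xs c x) (diagramEmbedding xs c y))
    (hM : ∀ k : ℕ, ∃ h : k ∈ M.S₁, (M.f ⟨k, h⟩).1 = k) :
    ENNReal.ofReal (dist x y) ≤ costInf M := by
  suffices ∀ z, ENNReal.ofReal |dist x z - dist y z| ≤ costInf M by
    simpa using this y
  refine fun z => hxs.induction_on z
    (isClosed_le (ENNReal.continuous_ofReal.comp (by fun_prop)) continuous_const) fun k => ?_
  obtain ⟨hk, hfk⟩ := hM k
  have := M.ofReal_dinf_le_costInf ⟨k, hk⟩
  rwa [hfk, dinf_diagramEmbedding_self] at this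

theorem bottleneck_diagramEmbedding_le (x y : X) :
    bottleneck (diagramEmbedding xs c x) (diagramEmbedding xs c y) ≤ ENNReal.ofReal (dist x y) :=
  bottleneck_le_of_forall_dinf_le fun k => by
    rw [dinf_diagramEmbedding_self]
    exact abs_dist_sub_le x y (xs k)

end Embedding

/-- Any partial matching between `φ(x)` and `φ(y)` that leaves some index unmatched or
matches some index `k` to an index `k' ≠ k` has ∞-cost at least `c`; consequently the
bottleneck distance between `φ(x)` and `φ(y)` equals `d(x,y)`. -/
theorem stmt9 {X : Type*} [MetricSpace X] (xs : ℕ → X) (hxs : DenseRange xs)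
    (c : ℝ) (hbdd : Bornology.IsBounded (Set.univ : Set X))
    (hc : Metric.diam (Set.univ : Set X) < c)
    (φ : X → ℕ → ℝ × ℝ)
    (hφ : ∀ x k, φ x k = (2 * c * k, 2 * c * (k + 1) + dist x (xs k)))
    (x y : X) :
    (∀ M : PartialMatching (φ x) (φ y),
      (∃ k : ℕ, k ∉ M.S₁ ∨ k ∉ M.S₂ ∨ ∃ h : k ∈ M.S₁, (M.f ⟨k, h⟩).1 ≠ k) →
      ENNReal.ofReal c ≤ costInf M) ∧
    bottleneck (φ x) (φ y) = ENNReal.ofReal (dist x y) := by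
  obtain rfl : φ = diagramEmbedding xs c := funext₂ hφ
  have hc₀ : 0 ≤ c := Metric.diam_nonneg.trans hc.le
  have hxy : dist x y < c :=
    (Metric.dist_le_diam_of_mem hbdd (Set.mem_univ x) (Set.mem_univ y)).trans_lt hc
  refine ⟨ofReal_le_costInf_diagramEmbedding hc₀,
    le_antisymm (bottleneck_diagramEmbedding_le x y) (le_iInf fun M => ?_)⟩
  by_cases hM : ∃ k : ℕ, k ∉ M.S₁ ∨ k ∉ M.S₂ ∨ ∃ h : k ∈ M.S₁, (M.f ⟨k, h⟩).1 ≠ k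
  · exact (ENNReal.ofReal_le_ofReal hxy.le).trans (ofReal_le_costInf_diagramEmbedding hc₀ M hM)
  · push Not at hM
    exact ofReal_dist_le_costInf_diagramEmbedding hxs M fun k => ⟨(hM k).1, (hM k).2.2 _⟩
end
end

section
/- Every separable, bounded metric space (X,d) admits an isometric embedding into the space of persistence diagrams Dgm_∞ with the bottleneck distance. Moreover, for any c > sup{d(x,y) : x,y ∈ X}, the embedding may be chosen so that its image lies in B(∅, 3c/2) ∖ B(∅, c), where B(∅, r) is the set of diagrams at bottleneck distance < r from the empty diagram. -/
open scoped ENNReal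

noncomputable section

/- ### Auxiliary machinery -/

/-- The embedding map: `x` goes to the diagram with `k`-th point
`(4ck + d(x, s k), 4ck + 2c)`. -/
def embedD {X : Type*} [MetricSpace X] (c : ℝ) (s : ℕ → X) (x : X) (k : ℕ) : ℝ × ℝ :=
  (4 * c * k + dist x (s k), 4 * c * k + 2 * c)

lemma aux_ofReal_le (r : ℝ) (E : ℝ≥0∞)
    (h : ∀ ε : ℝ, 0 < ε → ENNReal.ofReal (r - ε) ≤ E) :
    ENNReal.ofReal r ≤ E := by
  by_contra hlt
  push_neg at hlt
  have hE : E ≠ ⊤ := (hlt.trans ENNReal.ofReal_lt_top).ne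
  have hEr : E.toReal < r := by
    rwa [ENNReal.lt_ofReal_iff_toReal_lt hE] at hlt
  set ε : ℝ := (r - E.toReal) / 2 with hεdef
  have hε : 0 < ε := by simp only [hεdef]; linarith
  have h1 : ENNReal.ofReal (r - ε) ≤ E := h ε hε
  have h2 : E < ENNReal.ofReal (r - ε) := by
    rw [ENNReal.lt_ofReal_iff_toReal_lt hE]
    simp only [hεdef]; linarith
  exact (h1.trans_lt h2).false

lemma embedD_ddiag {X : Type*} [MetricSpace X] (c : ℝ) (s : ℕ → X) (x : X) (k : ℕ) :
    ddiag (embedD c s x k) = c - dist x (s k) / 2 := by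
  simp only [ddiag, embedD]; ring

lemma embedD_dinf_same {X : Type*} [MetricSpace X] (c : ℝ) (s : ℕ → X) (x y : X) (k : ℕ) :
    dinf (embedD c s x k) (embedD c s y k) = |dist x (s k) - dist y (s k)| := by
  simp only [dinf, embedD]
  rw [show 4 * c * (k:ℝ) + dist x (s k) - (4 * c * k + dist y (s k))
      = dist x (s k) - dist y (s k) from by ring]
  simp

lemma embedD_dinf_ne {X : Type*} [MetricSpace X] {c : ℝ} (hc0 : 0 < c) (s : ℕ → X)
    (x y : X) {k j : ℕ} (hkj : k ≠ j) :
    c ≤ dinf (embedD c s x k) (embedD c s y j) := by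
  have h1 : ((k:ℤ) - j) ≠ 0 := sub_ne_zero.mpr (by exact_mod_cast hkj)
  have h2 : (1:ℤ) ≤ |(k:ℤ) - j| := Int.one_le_abs h1
  have h3 : (1:ℝ) ≤ |(k:ℝ) - j| := by exact_mod_cast h2
  have h4 : c ≤ |(embedD c s x k).2 - (embedD c s y j).2| := by
    simp only [embedD]
    rw [show 4 * c * (k:ℝ) + 2 * c - (4 * c * j + 2 * c) = 4 * c * ((k:ℝ) - j) from by ring,
      abs_mul, abs_of_nonneg (by linarith : (0:ℝ) ≤ 4 * c)]
    nlinarith [abs_nonneg ((k:ℝ) - j)]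
  exact h4.trans (le_max_right _ _)

/-- The unmatched-point cost lower bound. -/
lemma costInf_ge_unmatched₁ {I₁ I₂ : Type*} {D₁ : I₁ → ℝ × ℝ} {D₂ : I₂ → ℝ × ℝ}
    (M : PartialMatching D₁ D₂) {k : I₁} (hk : k ∉ M.S₁) :
    ENNReal.ofReal (ddiag (D₁ k)) ≤ costInf M :=
  le_trans (le_iSup (fun i : {i : I₁ // i ∉ M.S₁} => ENNReal.ofReal (ddiag (D₁ i.1)))
    ⟨k, hk⟩) ((le_max_left _ _).trans (le_max_right _ _))

/-- The matched-point cost lower bound. -/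
lemma costInf_ge_matched {I₁ I₂ : Type*} {D₁ : I₁ → ℝ × ℝ} {D₂ : I₂ → ℝ × ℝ}
    (M : PartialMatching D₁ D₂) (i : M.S₁) :
    ENNReal.ofReal (dinf (D₁ i.1) (D₂ (M.f i).1)) ≤ costInf M :=
  le_trans (le_iSup (fun i : M.S₁ => ENNReal.ofReal (dinf (D₁ i.1) (D₂ (M.f i).1))) i)
    (le_max_left _ _)

/-- Every separable, bounded metric space isometrically embeds into the space of
persistence diagrams with the bottleneck distance; moreover, for any
`c > sup {d(x,y)}`, the image can be chosen inside `B(∅, 3c/2) ∖ B(∅, c)`. -/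
theorem stmt10 {X : Type*} [MetricSpace X] [TopologicalSpace.SeparableSpace X]
    (c : ℝ) (hbdd : Bornology.IsBounded (Set.univ : Set X))
    (hc : Metric.diam (Set.univ : Set X) < c) :
    ∃ φ : X → ℕ → ℝ × ℝ,
      (∀ x k, (φ x k).1 < (φ x k).2) ∧
      (∀ x y, bottleneck (φ x) (φ y) = ENNReal.ofReal (dist x y)) ∧
      (∀ x, ENNReal.ofReal c ≤ bottleneck (φ x) emptyD ∧
        bottleneck (φ x) emptyD < ENNReal.ofReal (3 * c / 2)) := by
  rcases isEmpty_or_nonempty X with hX | hX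
  · exact ⟨fun x => isEmptyElim x, fun x => isEmptyElim x, fun x => isEmptyElim x,
      fun x => isEmptyElim x⟩
  have hc0 : 0 < c := lt_of_le_of_lt Metric.diam_nonneg hc
  set s : ℕ → X := TopologicalSpace.denseSeq X with hs_def
  have hs : DenseRange s := TopologicalSpace.denseRange_denseSeq X
  have hdc : ∀ x y : X, dist x y < c := fun x y =>
    lt_of_le_of_lt (Metric.dist_le_diam_of_mem hbdd (Set.mem_univ x) (Set.mem_univ y)) hc
  refine ⟨embedD c s, ?_, ?_, ?_⟩
  · -- points above the diagonal
    intro x k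
    simp only [embedD]
    have := hdc x (s k)
    linarith
  · -- isometry
    intro x y
    refine le_antisymm ?_ ?_
    · -- upper bound: identity matching
      refine le_trans (iInf_le _
        (⟨Set.univ, Set.univ, fun i => ⟨i.1, Set.mem_univ _⟩,
          ⟨fun a b h => Subtype.ext (congrArg Subtype.val h),
            fun b => ⟨⟨b.1, Set.mem_univ _⟩, Subtype.ext rfl⟩⟩⟩ :
          PartialMatching (embedD c s x) (embedD c s y))) ?_
      unfold costInf
      refine max_le ?_ (max_le ?_ ?_)
      · refine iSup_le fun i => ?_
        show ENNReal.ofReal (dinf (embedD c s x i.1) (embedD c s y i.1)) ≤ _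
        rw [embedD_dinf_same]
        exact ENNReal.ofReal_le_ofReal (abs_dist_sub_le x y (s i.1))
      · exact iSup_le fun i => (i.2 (Set.mem_univ i.1)).elim
      · exact iSup_le fun i => (i.2 (Set.mem_univ i.1)).elim
    · -- lower bound
      refine le_iInf fun M => ?_
      refine aux_ofReal_le _ _ fun ε hε => ?_
      obtain ⟨k, hk⟩ := hs.exists_dist_lt x (half_pos hε)
      by_cases hmem : k ∈ M.S₁
      · set j := (M.f ⟨k, hmem⟩).1 with hj
        refine le_trans ?_ (costInf_ge_matched M ⟨k, hmem⟩)
        rw [← hj]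
        apply ENNReal.ofReal_le_ofReal
        by_cases hjk : j = k
        · rw [hjk, embedD_dinf_same]
          have htri : dist x y ≤ dist x (s k) + dist y (s k) := dist_triangle_right x y (s k)
          have : dist y (s k) - dist x (s k) ≤ |dist x (s k) - dist y (s k)| := by
            rw [abs_sub_comm]; exact le_abs_self _
          linarith
        · have := embedD_dinf_ne hc0 s x y (fun h => hjk h.symm)
          have := hdc x y
          linarith
      · refine le_trans ?_ (costInf_ge_unmatched₁ M hmem)
        apply ENNReal.ofReal_le_ofReal
        rw [embedD_ddiag]
        have := hdc x y
        have h0 : (0:ℝ) ≤ dist x (s k) := dist_nonneg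
        linarith
  · -- distance to the empty diagram
    intro x
    constructor
    · -- lower bound
      refine le_iInf fun M => ?_
      have hnm : ∀ i : ℕ, i ∉ M.S₁ := by
        intro i hi
        exact (M.f ⟨i, hi⟩).1.elim
      refine aux_ofReal_le _ _ fun ε hε => ?_
      obtain ⟨k, hk⟩ := hs.exists_dist_lt x hε
      refine le_trans ?_ (costInf_ge_unmatched₁ M (hnm k))
      apply ENNReal.ofReal_le_ofReal
      rw [embedD_ddiag]
      have h0 : (0:ℝ) ≤ dist x (s k) := dist_nonneg
      linarith
    · -- upper bound
      refine lt_of_le_of_lt (iInf_le _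
        (⟨∅, ∅, fun i => (Set.notMem_empty _ i.2).elim,
          ⟨fun a => (Set.notMem_empty _ a.2).elim,
            fun b => (Set.notMem_empty _ b.2).elim⟩⟩ :
          PartialMatching (embedD c s x) emptyD)) ?_
      have hlt : ENNReal.ofReal c < ENNReal.ofReal (3 * c / 2) := by
        rw [ENNReal.ofReal_lt_ofReal_iff (by linarith)]
        linarith
      refine lt_of_le_of_lt ?_ hlt
      unfold costInf
      refine max_le ?_ (max_le ?_ ?_)
      · exact iSup_le fun i => (Set.notMem_empty _ i.2).elim
      · refine iSup_le fun i => ?_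
        apply ENNReal.ofReal_le_ofReal
        rw [embedD_ddiag]
        have h0 : (0:ℝ) ≤ dist x (s i.1) := dist_nonneg
        linarith
      · exact iSup_le fun i => i.1.elim
end
end

section
/- The generalized roundness of the space Dgm_∞ of persistence diagrams with the bottleneck distance is zero: for every q > 0 there exist finitely many points a₁,…,aₙ,b₁,…,bₙ in Dgm_∞ such that Σ_{i<j}(w_∞(aᵢ,aⱼ)^q + w_∞(bᵢ,bⱼ)^q) > Σ_{i,j} w_∞(aᵢ,bⱼ)^q. -/
open scoped ENNReal

noncomputable section

/- ### Auxiliary constructions -/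

/-- The family of diagrams we use: point `k` lives near `(8k, 8k+3)`, displaced by `v k`. -/
def Dg (v : ℕ → ℝ) : ℕ → ℝ × ℝ := fun k => (8 * k, 8 * k + 3 + v k)

lemma Dg_lt (v : ℕ → ℝ) (hv : ∀ k, |v k| ≤ 1) (k : ℕ) : (Dg v k).1 < (Dg v k).2 := by
  have := abs_le.mp (hv k)
  simp only [Dg]
  linarith [this.1]

/-- The identity (total) matching between two `Dg` diagrams. -/
def idMatch (v w : ℕ → ℝ) : PartialMatching (Dg v) (Dg w) where
  S₁ := Set.univ
  S₂ := Set.univ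
  f := fun i => ⟨i.1, trivial⟩
  bij := ⟨fun a b h => Subtype.ext (congrArg Subtype.val h),
    fun b => ⟨⟨b.1, trivial⟩, Subtype.ext rfl⟩⟩

lemma bottleneck_Dg_le (v w : ℕ → ℝ) (c : ℝ) (hvw : ∀ k, |v k - w k| ≤ c) :
    bottleneck (Dg v) (Dg w) ≤ ENNReal.ofReal c := by
  refine le_trans (iInf_le _ (idMatch v w)) ?_
  have h1 : (⨆ i : (idMatch v w).S₁,
      ENNReal.ofReal (dinf (Dg v i.1) (Dg w ((idMatch v w).f i).1))) ≤ ENNReal.ofReal c := by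
    refine iSup_le fun i => ?_
    refine ENNReal.ofReal_le_ofReal ?_
    have : dinf (Dg v i.1) (Dg w i.1) = |v i.1 - w i.1| := by
      simp only [dinf, Dg]
      rw [show (8 * (i.1:ℝ) - 8 * i.1) = 0 by ring,
        show (8 * (i.1:ℝ) + 3 + v i.1 - (8 * i.1 + 3 + w i.1)) = v i.1 - w i.1 by ring]
      simp [abs_nonneg]
    rw [show ((idMatch v w).f i).1 = i.1 from rfl, this]
    exact hvw i.1
  have e2 : IsEmpty {i : ℕ // i ∉ (idMatch v w).S₁} := ⟨fun i => i.2 trivial⟩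
  have e3 : IsEmpty {i : ℕ // i ∉ (idMatch v w).S₂} := ⟨fun i => i.2 trivial⟩
  simp only [costInf]
  refine max_le h1 (max_le ?_ ?_)
  · rw [@iSup_of_empty _ _ _ e2]; exact bot_le
  · rw [@iSup_of_empty _ _ _ e3]; exact bot_le

/-- The empty matching with the empty diagram. -/
def emptyMatch (v : ℕ → ℝ) : PartialMatching (Dg v) emptyD where
  S₁ := ∅
  S₂ := ∅
  f := fun i => absurd i.2 (Set.notMem_empty _)
  bij := ⟨fun a => absurd a.2 (Set.notMem_empty _), fun b => b.1.elim⟩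

lemma bottleneck_Dg_empty (v : ℕ → ℝ) (hv : ∀ k, |v k| ≤ 1) :
    bottleneck (Dg v) emptyD < ⊤ := by
  refine lt_of_le_of_lt (iInf_le _ (emptyMatch v)) ?_
  have e1 : IsEmpty ((emptyMatch v).S₁ : Type) := ⟨fun i => absurd i.2 (Set.notMem_empty _)⟩
  have e3 : IsEmpty {i : Empty // i ∉ (emptyMatch v).S₂} := ⟨fun i => i.1.elim⟩
  have h2 : (⨆ i : {i : ℕ // i ∉ (emptyMatch v).S₁}, ENNReal.ofReal (ddiag (Dg v i.1)))
      ≤ ENNReal.ofReal 2 := by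
    refine iSup_le fun i => ENNReal.ofReal_le_ofReal ?_
    have := abs_le.mp (hv i.1)
    simp only [ddiag, Dg]
    linarith [this.2]
  calc costInf (emptyMatch v)
      ≤ ENNReal.ofReal 2 := by
        simp only [costInf]
        refine max_le ?_ (max_le h2 ?_)
        · rw [@iSup_of_empty _ _ _ e1]; exact bot_le
        · rw [@iSup_of_empty _ _ _ e3]; exact bot_le
    _ < ⊤ := ENNReal.ofReal_lt_top

lemma bottleneck_Dg_ge (v w : ℕ → ℝ) (k₀ : ℕ) (hv : v k₀ = 1) (hw : w k₀ = -1) :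
    ENNReal.ofReal 2 ≤ bottleneck (Dg v) (Dg w) := by
  refine le_iInf fun M => ?_
  by_cases h : k₀ ∈ M.S₁
  · -- matched: cost at least 2 whichever point it is matched to
    have key : ∀ l : ℕ, (2 : ℝ) ≤ dinf (Dg v k₀) (Dg w l) := by
      intro l
      by_cases hlk : l = k₀
      · subst hlk
        have : dinf (Dg v l) (Dg w l) = max |8 * (l:ℝ) - 8 * l| |v l - w l| := by
          simp only [dinf, Dg]
          congr 1
          ring_nf
        rw [this]
        refine le_max_of_le_right ?_
        rw [hv, hw]; norm_num
      · refine le_max_of_le_left ?_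
        simp only [Dg]
        have h8 : (8:ℝ) * k₀ - 8 * l = 8 * ((k₀:ℝ) - l) := by ring
        rw [h8, abs_mul]
        have : (1:ℝ) ≤ |(k₀:ℝ) - l| := by
          have : (k₀:ℝ) ≠ l := by
            exact_mod_cast fun hh => hlk (by exact_mod_cast hh.symm)
          have h1 : (k₀:ℤ) ≠ (l:ℤ) := by exact_mod_cast this
          have : (1:ℝ) ≤ |((k₀:ℤ) - l : ℤ)| := by
            exact_mod_cast Int.one_le_abs (sub_ne_zero.mpr h1)
          calc (1:ℝ) ≤ |((k₀:ℤ) - l : ℤ)| := this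
            _ = |(k₀:ℝ) - l| := by push_cast; ring_nf
        have h88 : |(8:ℝ)| = 8 := by norm_num
        nlinarith [abs_nonneg ((k₀:ℝ) - l)]
    calc ENNReal.ofReal 2
        ≤ ENNReal.ofReal (dinf (Dg v k₀) (Dg w (M.f ⟨k₀, h⟩).1)) :=
          ENNReal.ofReal_le_ofReal (key _)
      _ ≤ ⨆ i : M.S₁, ENNReal.ofReal (dinf (Dg v i.1) (Dg w (M.f i).1)) :=
          le_iSup (fun i : M.S₁ => ENNReal.ofReal (dinf (Dg v i.1) (Dg w (M.f i).1))) ⟨k₀, h⟩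
      _ ≤ costInf M := le_max_left _ _
  · -- unmatched: distance to diagonal is 2
    have key : ddiag (Dg v k₀) = 2 := by
      simp only [ddiag, Dg, hv]; ring
    calc ENNReal.ofReal 2 = ENNReal.ofReal (ddiag (Dg v k₀)) := by rw [key]
      _ ≤ ⨆ i : {i : ℕ // i ∉ M.S₁}, ENNReal.ofReal (ddiag (Dg v i.1)) :=
          le_iSup (fun i : {i : ℕ // i ∉ M.S₁} => ENNReal.ofReal (ddiag (Dg v i.1))) ⟨k₀, h⟩
      _ ≤ costInf M := le_trans (le_max_left _ _) (le_max_right _ _)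

/-- values for the `a`-diagrams -/
def Av (n : ℕ) (i : Fin n) : ℕ → ℝ := fun k =>
  if k = i then 1 else if k < n then -1 else 0

/-- values for the `b`-diagrams -/
def Bv (n : ℕ) (j : Fin n) : ℕ → ℝ := fun k =>
  if k = n + j then 1 else if n ≤ k ∧ k < 2 * n then -1 else 0

lemma Av_abs (n : ℕ) (i : Fin n) (k : ℕ) : |Av n i k| ≤ 1 := by
  simp only [Av]; split_ifs <;> norm_num

lemma Bv_abs (n : ℕ) (j : Fin n) (k : ℕ) : |Bv n j k| ≤ 1 := by
  simp only [Bv]; split_ifs <;> norm_num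

lemma Av_zero_of_ge (n : ℕ) (i : Fin n) (k : ℕ) (hk : n ≤ k) : Av n i k = 0 := by
  simp only [Av]
  rw [if_neg, if_neg]
  · omega
  · have := i.2; omega

lemma Bv_zero_of_lt (n : ℕ) (j : Fin n) (k : ℕ) (hk : k < n) : Bv n j k = 0 := by
  simp only [Bv]
  rw [if_neg, if_neg]
  · omega
  · omega

lemma cross_le (n : ℕ) (i j : Fin n) (k : ℕ) : |Av n i k - Bv n j k| ≤ 1 := by
  rcases lt_or_ge k n with hk | hk
  · rw [Bv_zero_of_lt n j k hk, sub_zero]; exact Av_abs n i k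
  · rw [Av_zero_of_ge n i k hk, zero_sub, abs_neg]; exact Bv_abs n j k


lemma Av_self (n : ℕ) (i : Fin n) : Av n i i = 1 := by simp [Av]

lemma Av_other (n : ℕ) (i j : Fin n) (h : i ≠ j) : Av n j (i : ℕ) = -1 := by
  simp only [Av]
  rw [if_neg, if_pos i.2]
  exact fun hh => h (Fin.ext hh)

lemma Bv_self (n : ℕ) (i : Fin n) : Bv n i (n + i) = 1 := by simp [Bv]

lemma Bv_other (n : ℕ) (i j : Fin n) (h : i ≠ j) : Bv n j (n + (i : ℕ)) = -1 := by
  simp only [Bv]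
  rw [if_neg, if_pos]
  · exact ⟨Nat.le_add_right _ _, by have := i.2; omega⟩
  · have : (i : ℕ) ≠ (j : ℕ) := fun hh => h (Fin.ext hh)
    omega

lemma same_ab (n : ℕ) (v w : ℕ → ℝ) (k₀ : ℕ) (hv : v k₀ = 1) (hw : w k₀ = -1)
    (hva : ∀ k, |v k| ≤ 1) (hwa : ∀ k, |w k| ≤ 1) :
    (bottleneck (Dg v) (Dg w)).toReal = 2 := by
  have hle : bottleneck (Dg v) (Dg w) ≤ ENNReal.ofReal 2 := by
    refine bottleneck_Dg_le v w 2 fun k => ?_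
    have h1 := abs_le.mp (hva k); have h2 := abs_le.mp (hwa k)
    rw [abs_le]; constructor <;> linarith [h1.1, h1.2, h2.1, h2.2]
  have hge := bottleneck_Dg_ge v w k₀ hv hw
  have : bottleneck (Dg v) (Dg w) = ENNReal.ofReal 2 := le_antisymm hle hge
  rw [this, ENNReal.toReal_ofReal]; norm_num

lemma count_lt (n : ℕ) (c : ℝ) :
    2 * (∑ i : Fin n, ∑ j : Fin n, (if i < j then c else 0)) = ((n : ℝ)^2 - n) * c := by
  have h1 : (∑ i : Fin n, ∑ j : Fin n, (if j < i then c else 0))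
      = ∑ i : Fin n, ∑ j : Fin n, (if i < j then c else 0) := Finset.sum_comm
  have h2 : (∑ i : Fin n, ∑ j : Fin n, (if i = j then c else 0)) = (n : ℝ) * c := by
    have : ∀ i : Fin n, (∑ j : Fin n, (if i = j then c else 0)) = c := by
      intro i
      rw [Finset.sum_ite_eq]
      simp
    rw [Finset.sum_congr rfl fun i _ => this i]
    simp [Finset.sum_const, Finset.card_univ, mul_comm]
  have h3 : (∑ i : Fin n, ∑ j : Fin n,
      ((if i < j then c else 0) + ((if j < i then c else 0) + (if i = j then c else 0))))
      = (n : ℝ) * n * c := by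
    have : ∀ i j : Fin n,
        ((if i < j then c else 0) + ((if j < i then c else 0) + (if i = j then c else 0))) = c := by
      intro i j
      rcases lt_trichotomy i j with h | h | h
      · simp [h, not_lt.mpr h.le, h.ne]
      · simp [h, lt_irrefl]
      · simp [h, not_lt.mpr h.le, h.ne']
    rw [Finset.sum_congr rfl fun i _ => Finset.sum_congr rfl fun j _ => this i j]
    simp only [Finset.sum_const, Finset.card_univ, Fintype.card_fin, nsmul_eq_mul]
    ring
  simp only [Finset.sum_add_distrib] at h3
  rw [h1, h2] at h3
  nlinarith [h3]

/-- The generalized roundness of the space of persistence diagrams with the bottleneck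
distance is zero: for every `q > 0` there are diagrams `a₁,…,aₙ,b₁,…,bₙ` (each at finite
bottleneck distance from the empty diagram) violating the roundness-`q` inequality. -/
theorem stmt11 (q : ℝ) (hq : 0 < q) :
    ∃ (n : ℕ) (a b : Fin n → ℕ → ℝ × ℝ),
      (∀ i k, (a i k).1 < (a i k).2) ∧ (∀ i k, (b i k).1 < (b i k).2) ∧
      (∀ i, bottleneck (a i) emptyD < ⊤) ∧ (∀ i, bottleneck (b i) emptyD < ⊤) ∧
      (∑ i : Fin n, ∑ j : Fin n, (bottleneck (a i) (b j)).toReal ^ q) <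
        ∑ i : Fin n, ∑ j : Fin n, if i < j then
          (bottleneck (a i) (a j)).toReal ^ q + (bottleneck (b i) (b j)).toReal ^ q
        else 0 := by
  have h2q : (1 : ℝ) < (2 : ℝ) ^ q := Real.one_lt_rpow_iff_of_pos (by norm_num) |>.mpr
    (Or.inl ⟨by norm_num, hq⟩)
  have hε : (0 : ℝ) < (2 : ℝ) ^ q - 1 := by linarith
  obtain ⟨m, hm⟩ := exists_nat_gt (1 / ((2 : ℝ) ^ q - 1))
  have hme : (1 : ℝ) < (m : ℝ) * ((2 : ℝ) ^ q - 1) := by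
    rw [div_lt_iff₀ hε] at hm
    exact hm
  set n : ℕ := m + 2 with hn
  refine ⟨n, fun i => Dg (Av n i), fun j => Dg (Bv n j), ?_, ?_, ?_, ?_, ?_⟩
  · exact fun i k => Dg_lt _ (Av_abs n i) k
  · exact fun j k => Dg_lt _ (Bv_abs n j) k
  · exact fun i => bottleneck_Dg_empty _ (Av_abs n i)
  · exact fun j => bottleneck_Dg_empty _ (Bv_abs n j)
  · -- the roundness inequality
    have hcross : ∀ i j : Fin n, (bottleneck (Dg (Av n i)) (Dg (Bv n j))).toReal ^ q ≤ 1 := by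
      intro i j
      have hle : bottleneck (Dg (Av n i)) (Dg (Bv n j)) ≤ ENNReal.ofReal 1 :=
        bottleneck_Dg_le _ _ 1 (cross_le n i j)
      have h0 : (bottleneck (Dg (Av n i)) (Dg (Bv n j))).toReal ≤ 1 :=
        ENNReal.toReal_le_of_le_ofReal (by norm_num) hle
      exact Real.rpow_le_one ENNReal.toReal_nonneg h0 hq.le
    have hsame : ∀ i j : Fin n, i < j →
        (bottleneck (Dg (Av n i)) (Dg (Av n j))).toReal ^ q
          + (bottleneck (Dg (Bv n i)) (Dg (Bv n j))).toReal ^ q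
          = (2 : ℝ) ^ q + (2 : ℝ) ^ q := by
      intro i j hij
      have ha : (bottleneck (Dg (Av n i)) (Dg (Av n j))).toReal = 2 :=
        same_ab n _ _ i (Av_self n i) (Av_other n i j hij.ne) (Av_abs n i) (Av_abs n j)
      have hb : (bottleneck (Dg (Bv n i)) (Dg (Bv n j))).toReal = 2 :=
        same_ab n _ _ (n + i) (Bv_self n i) (Bv_other n i j hij.ne) (Bv_abs n i) (Bv_abs n j)
      rw [ha, hb]
    have hLHS : (∑ i : Fin n, ∑ j : Fin n,
        (bottleneck (Dg (Av n i)) (Dg (Bv n j))).toReal ^ q) ≤ (n : ℝ) * n := by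
      calc (∑ i : Fin n, ∑ j : Fin n, (bottleneck (Dg (Av n i)) (Dg (Bv n j))).toReal ^ q)
          ≤ ∑ _i : Fin n, ∑ _j : Fin n, (1 : ℝ) :=
            Finset.sum_le_sum fun i _ => Finset.sum_le_sum fun j _ => hcross i j
        _ = (n : ℝ) * n := by
            simp only [Finset.sum_const, Finset.card_univ, Fintype.card_fin, nsmul_eq_mul]
            ring
    have hRHS : (∑ i : Fin n, ∑ j : Fin n, if i < j then
        (bottleneck (Dg (Av n i)) (Dg (Av n j))).toReal ^ q
          + (bottleneck (Dg (Bv n i)) (Dg (Bv n j))).toReal ^ q else 0)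
        = ((n : ℝ)^2 - n) * ((2 : ℝ) ^ q + (2 : ℝ) ^ q) / 2 := by
      have : (∑ i : Fin n, ∑ j : Fin n, if i < j then
          (bottleneck (Dg (Av n i)) (Dg (Av n j))).toReal ^ q
            + (bottleneck (Dg (Bv n i)) (Dg (Bv n j))).toReal ^ q else 0)
          = ∑ i : Fin n, ∑ j : Fin n,
            if i < j then (2 : ℝ) ^ q + (2 : ℝ) ^ q else 0 := by
        refine Finset.sum_congr rfl fun i _ => Finset.sum_congr rfl fun j _ => ?_
        by_cases h : i < j
        · rw [if_pos h, if_pos h, hsame i j h]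
        · rw [if_neg h, if_neg h]
      rw [this]
      have := count_lt n ((2 : ℝ) ^ q + (2 : ℝ) ^ q)
      linarith
    rw [hRHS]
    refine lt_of_le_of_lt hLHS ?_
    have hncast : (n : ℝ) = (m : ℝ) + 2 := by rw [hn]; push_cast; ring
    rw [hncast]
    have hm0 : (0:ℝ) ≤ (m:ℝ) := Nat.cast_nonneg m
    nlinarith [hme, hε, hm0, mul_nonneg hm0 hε.le]
end
end

section
/- Let (X,d) be a semi-metric space and x₀ ∈ X. If k(x,y) = d(x,x₀) + d(y,x₀) − d(x,y) is a positive definite kernel, then (X,d) is of 1-negative type; conversely, if (X,d) is of 1-negative type, then k is a positive definite kernel. -/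
/-!
The quadratic form of `k` is `2 (∑ cᵢ) (∑ cᵢ d(xᵢ,x₀)) - ∑ cᵢ cⱼ d(xᵢ,xⱼ)`, so on weights
with `∑ cᵢ = 0` it is minus the quadratic form of `d`. Conversely, appending the point `x₀`
with weight `-∑ cᵢ` balances arbitrary weights, and (as `d(x₀,x₀) = 0` and `d` is symmetric)
the quadratic form of `d` on the extended configuration is minus that of `k` on the original.
-/

noncomputable section

/-- A semi-metric `d` on `X` is of `q`-negative type. -/
def NegType {X : Type*} (d : X → X → ℝ) (q : ℝ) : Prop :=
  ∀ (n : ℕ) (x : Fin n → X) (a : Fin n → ℝ), (∑ i, a i) = 0 →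
    ∑ i, ∑ j, a i * a j * d (x i) (x j) ^ q ≤ 0

/-- `k : X × X → ℝ` is a positive definite kernel. -/
def PosDefKernel {X : Type*} (k : X → X → ℝ) : Prop :=
  ∀ (n : ℕ) (x : Fin n → X) (c : Fin n → ℝ),
    0 ≤ ∑ i, ∑ j, c i * c j * k (x i) (x j)

open Finset

lemma sum_sum_mul_mul_add_sub {ι : Type*} [Fintype ι] (c f : ι → ℝ) (D : ι → ι → ℝ) :
    ∑ i, ∑ j, c i * c j * (f i + f j - D i j)
      = 2 * (∑ i, c i) * (∑ i, c i * f i) - ∑ i, ∑ j, c i * c j * D i j := by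
  have hrow : ∀ i, ∑ j, c i * c j * (f i + f j - D i j)
      = c i * f i * ∑ j, c j + c i * ∑ j, c j * f j - ∑ j, c i * c j * D i j := by
    intro i
    simp only [mul_sum, ← sum_sub_distrib, ← sum_add_distrib]
    exact sum_congr rfl fun j _ => by ring
  simp only [hrow, sum_sub_distrib, sum_add_distrib, ← sum_mul]
  ring

lemma sum_sum_snoc {X : Type*} {n : ℕ} (g : X → X → ℝ) (x : Fin n → X) (x₀ : X)
    (c : Fin n → ℝ) (t : ℝ) :
    ∑ i, ∑ j, Fin.snoc (α := fun _ => ℝ) c t i * Fin.snoc (α := fun _ => ℝ) c t j *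
        g (Fin.snoc (α := fun _ => X) x x₀ i) (Fin.snoc (α := fun _ => X) x x₀ j)
      = ∑ i, ∑ j, c i * c j * g (x i) (x j) + t * ∑ j, c j * g x₀ (x j)
        + t * ∑ i, c i * g (x i) x₀ + t ^ 2 * g x₀ x₀ := by
  simp only [Fin.sum_univ_castSucc, Fin.snoc_castSucc, Fin.snoc_last, sum_add_distrib,
    mul_sum]
  ring_nf

lemma negType_one_iff {X : Type*} (d : X → X → ℝ) :
    NegType d 1 ↔ ∀ (n : ℕ) (x : Fin n → X) (a : Fin n → ℝ), ∑ i, a i = 0 →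
      ∑ i, ∑ j, a i * a j * d (x i) (x j) ≤ 0 := by
  simp only [NegType, Real.rpow_one]

theorem stmt17_general {X : Type*} (d : X → X → ℝ)
    (h0 : ∀ x, d x x = 0) (hsymm : ∀ x y, d x y = d y x)
    (x₀ : X) :
    PosDefKernel (fun x y => d x x₀ + d y x₀ - d x y) ↔ NegType d 1 := by
  rw [negType_one_iff]
  constructor
  · intro hk n x a ha
    have := hk n x a
    rw [sum_sum_mul_mul_add_sub, ha] at this
    linarith
  · intro hd n x c
    have := hd (n + 1) (Fin.snoc x x₀) (Fin.snoc c (-∑ i, c i))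
      (by simp [Fin.sum_univ_castSucc])
    rw [sum_sum_snoc] at this
    simp only [h0, hsymm x₀] at this
    show 0 ≤ ∑ i, ∑ j, c i * c j * (d (x i) x₀ + d (x j) x₀ - d (x i) (x j))
    rw [sum_sum_mul_mul_add_sub (f := fun i => d (x i) x₀)]
    linarith

/-- For a semi-metric space `(X,d)` and `x₀ ∈ X`, the function
`k(x,y) = d(x,x₀) + d(y,x₀) - d(x,y)` is a positive definite kernel iff `(X,d)` is of
`1`-negative type. -/
theorem stmt17 {X : Type*} (d : X → X → ℝ)
    (h0 : ∀ x, d x x = 0) (hsymm : ∀ x y, d x y = d y x) (hnonneg : ∀ x y, 0 ≤ d x y)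
    (x₀ : X) :
    PosDefKernel (fun x y => d x x₀ + d y x₀ - d x y) ↔ NegType d 1 :=
  stmt17_general d h0 hsymm x₀
end
end
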